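/- Let positive integers m, n, h, k, a, b, l, d, p, q satisfy (m·lcm(n,p))/n = h, (q·lcm(n,p))/p = k, (p·lcm(q,a))/q = l, (b·lcm(q,a))/a = d, with m ≠ h and l ≠ p. Set α = lcm(n,p)/p and β = l/p. Then h/m and d/b are positive integers, β ≠ 1, p = l/β = (n·h)/(m·α), q = k/α = (a·d)/(b·β), gcd(α, h/m) = 1, and gcd(β, d/b) = 1. -/

import Mathlib

/-!
Both equations have the same shape: `h = m · (t/n)` and `k = q · (t/p)` with `t = lcm n p`
(for `X ⋉ C = D` after swapping the roles of the two factors). Hence `h/m = t/n`, `k/q = t/p`,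
and the coprimality claims reduce to `t/p = n/gcd(n,p)` and `t/n = p/gcd(n,p)` being coprime.
-/

namespace Nat

theorem lcm_div_right_eq_div_gcd (n : ℕ) {p : ℕ} (hp : 0 < p) : lcm n p / p = n / gcd n p := by
  rw [lcm_eq_mul_div, Nat.div_div_eq_div_mul, Nat.mul_div_mul_right _ _ hp]

theorem lcm_div_left_eq_div_gcd {n : ℕ} (p : ℕ) (hn : 0 < n) : lcm n p / n = p / gcd n p := by
  rw [lcm_comm, gcd_comm, lcm_div_right_eq_div_gcd p hn]

theorem coprime_lcm_div_right_lcm_div_left {n p : ℕ} (hn : 0 < n) (hp : 0 < p) :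
    Coprime (lcm n p / p) (lcm n p / n) := by
  rw [lcm_div_right_eq_div_gcd n hp, lcm_div_left_eq_div_gcd p hn]
  exact coprime_div_gcd_div_gcd (gcd_pos_of_pos_left p hn)

theorem lcm_div_right_pos {n p : ℕ} (hn : 0 < n) (hp : 0 < p) : 0 < lcm n p / p :=
  Nat.div_pos (le_of_dvd (lcm_pos hn hp) (dvd_lcm_right n p)) hp

end Nat

theorem stp_dimensions {m n p q h k : ℕ} (hm : 0 < m) (hn : 0 < n) (hp : 0 < p) (hq : 0 < q)
    (h1 : m * Nat.lcm n p / n = h) (h2 : q * Nat.lcm n p / p = k) :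
    m ∣ h ∧ k / q = Nat.lcm n p / p ∧ q = k / (Nat.lcm n p / p) ∧
      p = n * h / (m * (Nat.lcm n p / p)) ∧ Nat.Coprime (Nat.lcm n p / p) (h / m) := by
  have hh : h = m * (Nat.lcm n p / n) := h1 ▸ Nat.mul_div_assoc m (Nat.dvd_lcm_left n p)
  have hk : k = q * (Nat.lcm n p / p) := h2 ▸ Nat.mul_div_assoc q (Nat.dvd_lcm_right n p)
  have hα := Nat.lcm_div_right_pos hn hp
  have hhm : h / m = Nat.lcm n p / n := by rw [hh, Nat.mul_div_cancel_left _ hm]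
  have hnh : n * h = m * Nat.lcm n p := by
    rw [hh, Nat.mul_left_comm, Nat.mul_div_cancel' (Nat.dvd_lcm_left n p)]
  refine ⟨Dvd.intro _ hh.symm, by rw [hk, Nat.mul_div_cancel_left _ hq],
    by rw [hk, Nat.mul_div_cancel _ hα], ?_, hhm ▸ Nat.coprime_lcm_div_right_lcm_div_left hn hp⟩
  rw [hnh, Nat.mul_div_mul_left _ _ hm,
    Nat.div_div_self (Nat.dvd_lcm_right n p) (Nat.lcm_pos hn hp).ne']

theorem stmt5_general (m n h k a b l d p q : ℕ)
    (hm : 0 < m) (hn : 0 < n) (ha : 0 < a)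
    (hb : 0 < b) (hp : 0 < p) (hq : 0 < q)
    (h1 : m * Nat.lcm n p / n = h) (h2 : q * Nat.lcm n p / p = k)
    (h3 : p * Nat.lcm q a / q = l) (h4 : b * Nat.lcm q a / a = d)
    (hlp : l ≠ p) :
    m ∣ h ∧ b ∣ d ∧ l / p ≠ 1 ∧
      p = l / (l / p) ∧ p = n * h / (m * (Nat.lcm n p / p)) ∧
      q = k / (Nat.lcm n p / p) ∧ q = a * d / (b * (l / p)) ∧
      Nat.gcd (Nat.lcm n p / p) (h / m) = 1 ∧
      Nat.gcd (l / p) (d / b) = 1 := by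
  obtain ⟨hmh, -, hqk, hpnh, hcop₁⟩ := stp_dimensions hm hn hp hq h1 h2
  rw [Nat.lcm_comm] at h3 h4
  obtain ⟨hbd, hβ, hpl, hqad, hcop₂⟩ := stp_dimensions hb ha hq hp h4 h3
  rw [hβ]
  refine ⟨hmh, hbd, fun hβ₁ => hlp ?_, hpl, hpnh, hqk, hqad, hcop₁, hcop₂⟩
  rw [hpl, hβ₁, Nat.div_one]

/-- Dimension compatibility for the coupled STP tensor–matrix equations
`A ⋉ X = B`, `X ⋉ C = D`, general case `m ≠ h`, `l ≠ p`.  With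
`α = lcm(n,p)/p` and `β = l/p`: `h/m` and `d/b` are positive integers,
`β ≠ 1`, `p = l/β = (n·h)/(m·α)`, `q = k/α = (a·d)/(b·β)`,
`gcd(α, h/m) = 1` and `gcd(β, d/b) = 1`. -/
theorem stmt5 (m n h k a b l d p q : ℕ)
    (hm : 0 < m) (hn : 0 < n) (hh : 0 < h) (hk : 0 < k) (ha : 0 < a)
    (hb : 0 < b) (hl : 0 < l) (hd : 0 < d) (hp : 0 < p) (hq : 0 < q)
    (h1 : m * Nat.lcm n p / n = h) (h2 : q * Nat.lcm n p / p = k)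
    (h3 : p * Nat.lcm q a / q = l) (h4 : b * Nat.lcm q a / a = d)
    (hmh : m ≠ h) (hlp : l ≠ p) :
    m ∣ h ∧ b ∣ d ∧ l / p ≠ 1 ∧
      p = l / (l / p) ∧ p = n * h / (m * (Nat.lcm n p / p)) ∧
      q = k / (Nat.lcm n p / p) ∧ q = a * d / (b * (l / p)) ∧
      Nat.gcd (Nat.lcm n p / p) (h / m) = 1 ∧
      Nat.gcd (l / p) (d / b) = 1 :=
  stmt5_general m n h k a b l d p q hm hn ha hb hp hq h1 h2 h3 h4 hlp
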